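/- Assume λ is not a square in R^t. Then every left ideal of R^{t,x^{2p^s}−λ}_Θ has one of the following forms: (i) ⟨0⟩ or ⟨1⟩; (ii) a nontrivial left ideal contained in ⟨u⟩, namely R^{t,x^{2p^s}−λ}_Θ(u^{(t−1)−i_1}b_{i_1}(x) − u^{(t−1)−(i_1−1)}g_{i_1}(x)) + … + R^{t,x^{2p^s}−λ}_Θ(u^{(t−1)−i_n}b_{i_n}(x) − u^{(t−1)−(i_n−1)}g_{i_n}(x)), where 0 ≤ i_1 < … < i_n ≤ t−2, each b_{i_j}(x) ∈ B_λ^2 with deg b_{i_j}(x) ≤ 2p^s − 1, each g_{i_j}(x) ∈ R^{t,x^{2p^s}−λ}_Θ, and whenever u^{(t−1)−i_j}c(x) + u^{(t−1)−(i_j−1)}g(x) lies in the sum of the generators with indices i_k, …, i_n for some j < k, then b_{i_j}(x) right-divides c(x); (iii) a nontrivial left ideal not contained in ⟨u⟩, of the form R^{t,x^{2p^s}−λ}_Θ(b(x) + ug(x)) + I with b(x) ∈ B_λ^2, deg b(x) ≤ 2p^s − 1, g(x) ∈ R^{t,x^{2p^s}−λ}_Θ, and I a left ideal as in (ii) satisfying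 the same right-divisibility condition. -/
import Mathlib

set_option maxHeartbeats 1000000
set_option synthInstance.maxHeartbeats 400000

open Polynomial

namespace SkewPaper

variable (p m t : ℕ) [Fact p.Prime]

/-- The finite field `F_{p^m}`. -/
abbrev Fq : Type := GaloisField p m

/-- The finite chain ring `R^t = F_{p^m}[u]/⟨u^t⟩`. -/
abbrev Rt : Type :=
  Polynomial (Fq p m) ⧸ Ideal.span {(Polynomial.X : Polynomial (Fq p m)) ^ t}

/-- The element `u` of `R^t`. -/
noncomputable def uE : Rt p m t := Ideal.Quotient.mk _ Polynomial.X

/-- The canonical embedding `F_{p^m} → R^t`. -/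
noncomputable def eps : Fq p m →+* Rt p m t :=
  (Ideal.Quotient.mk _).comp Polynomial.C

/-- The automorphism `Θ` of `R^t` extending `θ` with `Θ(u) = u`,
i.e. `Θ(a₀ + a₁u + ⋯ + a_{t-1}u^{t-1}) = θ(a₀) + θ(a₁)u + ⋯ + θ(a_{t-1})u^{t-1}`. -/
noncomputable def Th (theta : Fq p m ≃+* Fq p m) : Rt p m t ≃+* Rt p m t :=
  Ideal.quotientEquiv _ _ (Polynomial.mapEquiv theta) (by
    rw [Ideal.map_span, Set.image_singleton]
    simp [Polynomial.mapEquiv_apply])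

/-- Reduction of `R^t` modulo `u`. -/
noncomputable def rdc (ht : 0 < t) : Rt p m t →+* Fq p m :=
  Ideal.Quotient.lift _ (Polynomial.evalRingHom 0) (by
    intro a ha
    rw [Ideal.mem_span_singleton] at ha
    obtain ⟨b, rfl⟩ := ha
    simp [zero_pow ht.ne'])

/-- `a` right-divides `b`, i.e. `b = h * a` for some `h`. -/
def RDvd {A : Type*} [Mul A] (a b : A) : Prop := ∃ h, b = h * a

/-- The element `Σᵢ ι(cᵢ) X^i` determined by a coefficient family `c`. -/
noncomputable def spoly {R A : Type*} [Semiring R] [Semiring A] (iot : R →+* A) (X : A)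
    (c : ℕ →₀ R) : A :=
  c.sum fun i a => iot a * X ^ i

/-- Lift `Σᵢ ι(ε(cᵢ)) X^i` of a skew polynomial over `F_{p^m}` to the skew polynomial ring
over `R^t` (coefficient-wise, via the embedding `F_{p^m} → R^t`). -/
noncomputable def liftP {A : Type*} [Semiring A] (iot : Rt p m t →+* A) (X : A)
    (c : ℕ →₀ Fq p m) : A :=
  c.sum fun i a => iot (eps p m t a) * X ^ i

/-- `λ = λ₀ + uλ₁ + ⋯ + u^{t-1}λ_{t-1}` as an element of `R^t`. -/
noncomputable def lamOf (lc : ℕ → Fq p m) : Rt p m t :=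
  ∑ i ∈ Finset.range t, eps p m t (lc i) * uE p m t ^ i

/-- The order `|Θ|` of `Θ` in the automorphism group of `R^t`. -/
noncomputable def thOrder (theta : Fq p m ≃+* Fq p m) : ℕ :=
  orderOf (G := RingAut (Rt p m t)) (Th p m t theta)

/-- The order `|θ|` of `θ` in the automorphism group of `F_{p^m}`. -/
noncomputable def thetaOrder (theta : Fq p m ≃+* Fq p m) : ℕ :=
  orderOf (G := RingAut (Fq p m)) theta

/-- The central polynomial `f(x) = Σᵢ fᵢ x^{i·|Θ|}` in the skew polynomial ring. -/
noncomputable def fOf {A : Type*} [Ring A] (theta : Fq p m ≃+* Fq p m)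
    (iot : Rt p m t →+* A) (X : A) (fc : ℕ →₀ Rt p m t) : A :=
  fc.sum fun i a => iot a * X ^ (i * thOrder p m t theta)

/-- The image of `u` in the quotient `R^{t,f}_Θ`. -/
noncomputable def uQ {P Q : Type*} [Semiring P] [Semiring Q] (iot : Rt p m t →+* P)
    (piQ : P →+* Q) : Q :=
  piQ (iot (uE p m t))

/-- The image in `R^{t,f}_Θ` of the lift of a skew polynomial over `F_{p^m}`. -/
noncomputable def lQ {P Q : Type*} [Semiring P] [Semiring Q] (iot : Rt p m t →+* P) (X : P)
    (piQ : P →+* Q) (c : ℕ →₀ Fq p m) : Q :=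
  piQ (liftP p m t iot X c)

/-- The class in `F_{p^m}[x,θ]/⟨f̄⟩` of the skew polynomial with coefficients `c`. -/
noncomputable def lQf {Pf Qf : Type*} [Semiring Pf] [Semiring Qf] (iotf : Fq p m →+* Pf)
    (Xf : Pf) (pif : Pf →+* Qf) (c : ℕ →₀ Fq p m) : Qf :=
  pif (spoly iotf Xf c)

/-- `b(x)` right-divides `c(x)` in the quotient `F_{p^m}[x,θ]/⟨f̄⟩`. -/
def RDvdC {Pf Qf : Type*} [Semiring Pf] [Semiring Qf] (iotf : Fq p m →+* Pf) (Xf : Pf)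
    (pif : Pf →+* Qf) (b c : ℕ →₀ Fq p m) : Prop :=
  ∃ h : Qf, lQf p m iotf Xf pif c = h * lQf p m iotf Xf pif b

/-- Membership in `B_w`: representative of degree `≤ D - 1` which right-divides `w`. -/
def InB {Pf : Type*} [Semiring Pf] (iotf : Fq p m →+* Pf) (Xf : Pf) (w : Pf) (D : ℕ)
    (c : ℕ →₀ Fq p m) : Prop :=
  (∀ i, D ≤ i → c i = 0) ∧ RDvd (spoly iotf Xf c) w

/-- `deg c < deg d` for coefficient families. -/
def degLt {R : Type*} [Zero R] (c d : ℕ →₀ R) : Prop := c.support.max < d.support.max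

/-- "Type (ii)" left ideals of `R^{t,f}_Θ`: those of the form
`Σⱼ R (u^{(t-1)-i_j} b_{i_j}(x) - u^{(t-1)-(i_j-1)} g_{i_j}(x))` with
`0 ≤ i₁ < ⋯ < i_n ≤ t-2`, `b_{i_j} ∈ B_w` of degree `≤ D - 1`, together with the
right-divisibility side condition. -/
def TypeTwo (p m t : ℕ) [Fact p.Prime] {P Pf Q Qf : Type*} [Ring P] [Ring Pf] [Ring Q] [Ring Qf]
    (iot : Rt p m t →+* P) (Xp : P) (piQ : P →+* Q)
    (iotf : Fq p m →+* Pf) (Xf : Pf) (pif : Pf →+* Qf)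
    (w : Pf) (D : ℕ) (J : Ideal Q) : Prop :=
  ∃ (n : ℕ) (idx : Fin n → ℕ) (bcs : Fin n → (ℕ →₀ Fq p m)) (gs : Fin n → Q),
    StrictMono idx ∧ (∀ j, idx j ≤ t - 2) ∧ (∀ j, InB p m iotf Xf w D (bcs j)) ∧
    J = Submodule.span Q (Set.range fun j : Fin n =>
        uQ p m t iot piQ ^ (t - 1 - idx j) * lQ p m t iot Xp piQ (bcs j)
          - uQ p m t iot piQ ^ (t - idx j) * gs j) ∧
    ∀ (j k : Fin n), j < k → ∀ (cc : ℕ →₀ Fq p m) (g : Q),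
      uQ p m t iot piQ ^ (t - 1 - idx j) * lQ p m t iot Xp piQ cc
          + uQ p m t iot piQ ^ (t - idx j) * g ∈
        Submodule.span Q ((fun l : Fin n =>
          uQ p m t iot piQ ^ (t - 1 - idx l) * lQ p m t iot Xp piQ (bcs l)
            - uQ p m t iot piQ ^ (t - idx l) * gs l) '' {l | k ≤ l}) →
      RDvdC p m iotf Xf pif (bcs j) cc



section SkewGen

variable {S A : Type*} [Ring S] [Ring A] (ι : S →+* A) (X : A) (σ : S →+* S)

/-- skew convolution of coefficient families -/
noncomputable def conv (σ : S →+* S) (c d : ℕ →₀ S) : ℕ →₀ S :=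
  c.sum fun i a => d.sum fun j b => Finsupp.single (i + j) (a * (σ ^ i) b)

/-- the evaluation map as an additive hom -/
noncomputable def EH : (ℕ →₀ S) →+ A :=
  Finsupp.liftAddHom fun i =>
    { toFun := fun a => ι a * X ^ i
      map_zero' := by simp
      map_add' := fun a b => by simp [add_mul] }

lemma EH_single (i : ℕ) (a : S) : EH ι X (Finsupp.single i a) = ι a * X ^ i := by
  simp [EH]

lemma EH_apply (c : ℕ →₀ S) : EH ι X c = ∑ i ∈ c.support, ι (c i) * X ^ i := by
  simp [EH, Finsupp.liftAddHom_apply, Finsupp.sum]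

lemma sigma_pow_apply (i : ℕ) (a : S) : (σ ^ (i + 1)) a = (σ ^ i) (σ a) := by
  rw [pow_succ]; rfl

lemma Xpow_mul (hX : ∀ a, X * ι a = ι (σ a) * X) (i : ℕ) (a : S) :
    X ^ i * ι a = ι ((σ ^ i) a) * X ^ i := by
  induction i generalizing a with
  | zero => simp
  | succ n ih =>
      rw [pow_succ, mul_assoc, hX a, ← mul_assoc, ih (σ a), sigma_pow_apply, mul_assoc]

lemma EH_finsupp_sum {T : Type*} [Zero T] (c : ℕ →₀ T) (f : ℕ → T → (ℕ →₀ S)) :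
    EH ι X (c.sum f) = ∑ i ∈ c.support, EH ι X (f i (c i)) := by
  rw [Finsupp.sum, map_sum]

lemma EH_mul (hX : ∀ a, X * ι a = ι (σ a) * X) (c d : ℕ →₀ S) :
    EH ι X c * EH ι X d = EH ι X (conv σ c d) := by
  rw [conv, EH_finsupp_sum, EH_apply ι X c, Finset.sum_mul]
  refine Finset.sum_congr rfl fun i _ => ?_
  rw [EH_finsupp_sum, EH_apply ι X d, Finset.mul_sum]
  refine Finset.sum_congr rfl fun j _ => ?_
  rw [EH_single, ← mul_assoc, mul_assoc (ι (c i)) (X ^ i) (ι (d j)),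
    Xpow_mul ι X σ hX i (d j), ← mul_assoc, ← map_mul, mul_assoc, ← pow_add]

lemma conv_apply (c d : ℕ →₀ S) (k : ℕ) :
    conv σ c d k = ∑ i ∈ c.support, ∑ j ∈ d.support,
      (if i + j = k then c i * (σ ^ i) (d j) else 0) := by
  rw [conv, Finsupp.sum_apply, Finsupp.sum]
  refine Finset.sum_congr rfl fun i _ => ?_
  rw [Finsupp.sum_apply, Finsupp.sum]
  refine Finset.sum_congr rfl fun j _ => ?_
  rw [Finsupp.single_apply]

lemma conv_apply_eq_zero {c d : ℕ →₀ S} {D1 D2 : ℕ} (hc : ∀ i, D1 < i → c i = 0)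
    (hd : ∀ j, D2 < j → d j = 0) (k : ℕ) (hk : D1 + D2 < k) : conv σ c d k = 0 := by
  rw [conv_apply]
  refine Finset.sum_eq_zero fun i hi => ?_
  refine Finset.sum_eq_zero fun j hj => ?_
  have hi' : i ≤ D1 := by
    by_contra h; exact (Finsupp.mem_support_iff.mp hi) (hc i (by omega))
  have hj' : j ≤ D2 := by
    by_contra h; exact (Finsupp.mem_support_iff.mp hj) (hd j (by omega))
  rw [if_neg (by omega)]

lemma conv_apply_top {c d : ℕ →₀ S} {D1 D2 : ℕ} (hc : ∀ i, D1 < i → c i = 0)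
    (hd : ∀ j, D2 < j → d j = 0) : conv σ c d (D1 + D2) = c D1 * (σ ^ D1) (d D2) := by
  rw [conv_apply]
  rw [Finset.sum_eq_single D1]
  · rw [Finset.sum_eq_single D2]
    · rw [if_pos rfl]
    · intro j hj hne
      have hj' : j ≤ D2 := by
        by_contra h; exact (Finsupp.mem_support_iff.mp hj) (hd j (by omega))
      rw [if_neg (by omega)]
    · intro h
      have hd2 : d D2 = 0 := Finsupp.notMem_support_iff.mp h
      simp [hd2]
  · intro i hi hne
    have hi' : i ≤ D1 := by
      by_contra h; exact (Finsupp.mem_support_iff.mp hi) (hc i (by omega))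
    refine Finset.sum_eq_zero fun j hj => ?_
    have hj' : j ≤ D2 := by
      by_contra h; exact (Finsupp.mem_support_iff.mp hj) (hd j (by omega))
    rw [if_neg (by omega)]
  · intro h
    have hc1 : c D1 = 0 := Finsupp.notMem_support_iff.mp h
    simp [hc1]

lemma conv_single_zero_left (v : S) (d : ℕ →₀ S) (k : ℕ) :
    conv σ (Finsupp.single 0 v) d k = v * d k := by
  by_cases hv : v = 0
  · subst hv
    rw [conv_apply]
    simp
  · rw [conv_apply, Finsupp.support_single_ne_zero _ hv, Finset.sum_singleton]
    rw [Finset.sum_eq_single k]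
    · rw [Finsupp.single_eq_same, if_pos (by omega)]
      simp
    · intro j hj hne; rw [if_neg (by omega)]
    · intro h
      have hdk : d k = 0 := Finsupp.notMem_support_iff.mp h
      simp [hdk]

lemma EH_const_smul (y : S) (c : ℕ →₀ S) : EH ι X (y • c) = ι y * EH ι X c := by
  rw [EH_apply, EH_apply, Finset.mul_sum]
  rw [Finset.sum_subset (Finsupp.support_smul (b := y) (g := c))]
  · refine Finset.sum_congr rfl fun i _ => ?_
    rw [Finsupp.smul_apply, smul_eq_mul, map_mul, mul_assoc]
  · intro i _ hi
    have : (y • c) i = 0 := Finsupp.notMem_support_iff.mp hi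
    simp [this]

/-- division with remainder by a monic skew polynomial -/
lemma skew_div (hX : ∀ a, X * ι a = ι (σ a) * X) (b : ℕ →₀ S) (n : ℕ)
    (hbn : b n = 1) (hb : ∀ j, n < j → b j = 0) :
    ∀ (N : ℕ) (a : ℕ →₀ S), (∀ i, N ≤ i → a i = 0) →
      ∃ q r : ℕ →₀ S, EH ι X a = EH ι X q * EH ι X b + EH ι X r ∧
        ∀ i, n ≤ i → r i = 0 := by
  intro N
  induction N with
  | zero =>
      intro a ha
      have h0 : a = 0 := Finsupp.ext fun i => ha i (Nat.zero_le i)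
      exact ⟨0, 0, by simp [h0], fun i _ => rfl⟩
  | succ N IH =>
      intro a ha
      by_cases hN : N < n
      · exact ⟨0, a, by simp, fun i hi => ha i (by omega)⟩
      · push_neg at hN
        set v := a N with hv
        set cs := conv σ (Finsupp.single (N - n) v) b with hcs
        have hsingle_high : ∀ i, N - n < i → (Finsupp.single (N - n) v) i = 0 := by
          intro i hi; exact Finsupp.single_eq_of_ne (by omega)
        have hcs_high : ∀ i, N < i → cs i = 0 := by
          intro i hi
          exact conv_apply_eq_zero σ hsingle_high hb i (by omega)
        have hcs_top : cs N = v := by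
          have h1 : cs (N - n + n) = (Finsupp.single (N - n) v) (N - n) * (σ ^ (N - n)) (b n) :=
            conv_apply_top σ hsingle_high hb
          rw [Nat.sub_add_cancel hN] at h1
          rw [h1, Finsupp.single_eq_same, hbn, map_one, mul_one]
        have ha' : ∀ i, N ≤ i → (a - cs) i = 0 := by
          intro i hi
          rcases eq_or_lt_of_le hi with h | h
          · rw [Finsupp.sub_apply, ← h, hcs_top, ← hv, sub_self]
          · rw [Finsupp.sub_apply, ha i (by omega), hcs_high i h, sub_self]
        obtain ⟨q, r, hqr, hr⟩ := IH (a - cs) ha'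
        refine ⟨q + Finsupp.single (N - n) v, r, ?_, hr⟩
        have hsplit : EH ι X a = EH ι X (a - cs) + EH ι X cs := by
          rw [← map_add]; congr 1; abel
        rw [hsplit, hqr, map_add, add_mul, ← EH_mul ι X σ hX]
        abel

lemma EH_injective (hrep : ∀ g : A, ∃! c : ℕ →₀ S, g = EH ι X c) :
    Function.Injective (EH ι X) := by
  intro c c' h
  exact (hrep (EH ι X c)).unique rfl h

lemma conv_single_zero_right (v : S) (c : ℕ →₀ S) (k : ℕ) :
    conv σ c (Finsupp.single 0 v) k = c k * (σ ^ k) v := by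
  rw [conv_apply]
  by_cases hv : v = 0
  · subst hv
    simp
  · rw [Finsupp.support_single_ne_zero _ hv]
    rw [Finset.sum_eq_single k]
    · rw [Finset.sum_singleton, Finsupp.single_eq_same, if_pos (by omega)]
    · intro i hi hne
      rw [Finset.sum_singleton, if_neg (by omega)]
    · intro h
      have hck : c k = 0 := Finsupp.notMem_support_iff.mp h
      simp [hck]

lemma conv_zero_left (d : ℕ →₀ S) : conv σ 0 d = 0 := by
  rw [conv, Finsupp.sum_zero_index]

lemma mapRange_conv {S' : Type*} [Ring S'] (ρ : S →+* S') (σ' : S' →+* S')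
    (hcomm : ∀ (i : ℕ) (a : S), ρ ((σ ^ i) a) = (σ' ^ i) (ρ a)) (c d : ℕ →₀ S) :
    Finsupp.mapRange ρ (map_zero ρ) (conv σ c d)
      = conv σ' (Finsupp.mapRange ρ (map_zero ρ) c) (Finsupp.mapRange ρ (map_zero ρ) d) := by
  ext k
  rw [Finsupp.mapRange_apply, conv_apply, conv_apply]
  rw [map_sum]
  have hinner : ∀ i ∈ c.support,
      ρ (∑ j ∈ d.support, if i + j = k then c i * (σ ^ i) (d j) else 0)
        = ∑ j ∈ d.support, if i + j = k then ρ (c i) * (σ' ^ i) (ρ (d j)) else 0 := by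
    intro i _
    rw [map_sum]
    refine Finset.sum_congr rfl fun j _ => ?_
    rw [apply_ite ρ, map_zero, map_mul, hcomm]
  rw [Finset.sum_congr rfl hinner]
  -- now extend the RHS sums from the mapRange supports to the original supports
  have h1 : ∀ i ∈ c.support,
      (∑ j ∈ (Finsupp.mapRange ρ (map_zero ρ) d).support,
        if i + j = k then (Finsupp.mapRange ρ (map_zero ρ) c) i
          * (σ' ^ i) ((Finsupp.mapRange ρ (map_zero ρ) d) j) else 0)
        = ∑ j ∈ d.support, if i + j = k then ρ (c i) * (σ' ^ i) (ρ (d j)) else 0 := by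
    intro i _
    rw [Finset.sum_subset (Finsupp.support_mapRange)]
    · refine Finset.sum_congr rfl fun j _ => ?_
      rw [Finsupp.mapRange_apply, Finsupp.mapRange_apply]
    · intro j _ hj
      have : (Finsupp.mapRange ρ (map_zero ρ) d) j = 0 := Finsupp.notMem_support_iff.mp hj
      simp [this]
  rw [Finset.sum_subset (Finsupp.support_mapRange
      (f := ρ) (hf := map_zero ρ) (g := c))]
  · exact (Finset.sum_congr rfl h1).symm
  · intro i _ hi
    have : (Finsupp.mapRange ρ (map_zero ρ) c) i = 0 := Finsupp.notMem_support_iff.mp hi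
    refine Finset.sum_eq_zero fun j _ => ?_
    simp [this]

/-- Every nonzero left ideal of the quotient of a skew polynomial ring over a field by a
monic central-ish polynomial is principal, generated by a monic right divisor of it. -/
lemma principal_ideal {K B Qf : Type*} [Field K] [Ring B] [Ring Qf]
    (ι : K →+* B) (X : B) (σ : K →+* K)
    (hX : ∀ a, X * ι a = ι (σ a) * X)
    (hrep : ∀ g : B, ∃! c : ℕ →₀ K, g = EH ι X c)
    (pif : B →+* Qf) (hpif : Function.Surjective pif)
    (F : ℕ →₀ K) (Dd : ℕ) (hF1 : F Dd = 1) (hFhigh : ∀ j, Dd < j → F j = 0)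
    (hker : RingHom.ker pif = Ideal.span {EH ι X F})
    (T : Ideal Qf) (hT : T ≠ ⊥) :
    ∃ β : ℕ →₀ K, (∀ i, Dd ≤ i → β i = 0) ∧ (∃ h, EH ι X F = h * EH ι X β) ∧
      pif (EH ι X β) ∈ T ∧ (∀ z ∈ T, ∃ h : Qf, z = h * pif (EH ι X β)) := by
  classical
  have hFker : pif (EH ι X F) = 0 := by
    have : EH ι X F ∈ RingHom.ker pif := by
      rw [hker]; exact Ideal.subset_span rfl
    exact RingHom.mem_ker.mp this
  -- the set of degrees of coefficient families representing nonzero elements of T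
  have hDs : ∃ n : ℕ, ∃ c : ℕ →₀ K, pif (EH ι X c) ∈ T ∧ c n ≠ 0 ∧ ∀ j, n < j → c j = 0 := by
    obtain ⟨z, hzT, hz0⟩ := (Submodule.ne_bot_iff T).mp hT
    obtain ⟨y, rfl⟩ := hpif z
    obtain ⟨c, hc, _⟩ := hrep y
    have hc0 : c ≠ 0 := by
      rintro rfl
      rw [map_zero] at hc
      rw [hc, map_zero] at hz0
      exact hz0 rfl
    have hne : c.support.Nonempty := Finsupp.support_nonempty_iff.mpr hc0
    refine ⟨c.support.max' hne, c, by rwa [← hc], ?_, ?_⟩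
    · exact Finsupp.mem_support_iff.mp (Finset.max'_mem _ hne)
    · intro j hj
      by_contra h
      exact absurd (Finset.le_max' _ j (Finsupp.mem_support_iff.mpr h)) (by omega)
  set P : ℕ → Prop := fun n => ∃ c : ℕ →₀ K, pif (EH ι X c) ∈ T ∧ c n ≠ 0 ∧ ∀ j, n < j → c j = 0
    with hP
  have hDs' : ∃ n, P n := hDs
  set n0 := Nat.find hDs' with hn0
  obtain ⟨c0, hc0T, hc0n, hc0high⟩ := Nat.find_spec hDs'
  set v : K := (c0 n0)⁻¹ with hv
  set β : ℕ →₀ K := v • c0 with hβ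
  have hβn : β n0 = 1 := by
    rw [hβ, Finsupp.smul_apply, smul_eq_mul, hv, inv_mul_cancel₀ hc0n]
  have hβhigh : ∀ j, n0 < j → β j = 0 := by
    intro j hj
    rw [hβ, Finsupp.smul_apply, smul_eq_mul, hc0high j hj, mul_zero]
  have hβT : pif (EH ι X β) ∈ T := by
    rw [hβ, EH_const_smul, map_mul]
    exact Ideal.mul_mem_left _ _ hc0T
  -- every element whose image lies in T is a left multiple of β
  have HDIV : ∀ y : B, pif y ∈ T → ∃ q : ℕ →₀ K, y = EH ι X q * EH ι X β := by
    intro y hy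
    obtain ⟨cy, hcy, _⟩ := hrep y
    obtain ⟨q, r, hqr, hrlow⟩ := skew_div ι X σ hX β n0 hβn hβhigh
        (if h : cy = 0 then 0 else cy.support.max' (Finsupp.support_nonempty_iff.mpr h) + 1) cy
        (by
          intro i hi
          by_cases h : cy = 0
          · simp [h]
          · rw [dif_neg h] at hi
            by_contra hcyi
            exact absurd (Finset.le_max' _ i (Finsupp.mem_support_iff.mpr hcyi)) (by omega))
    have hrT : pif (EH ι X r) ∈ T := by
      have : EH ι X r = y - EH ι X q * EH ι X β := by rw [hcy, hqr]; abel
      rw [this, map_sub, map_mul]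
      exact Submodule.sub_mem _ hy (Ideal.mul_mem_left _ _ hβT)
    have hr0 : r = 0 := by
      by_contra hr
      have hrne : r.support.Nonempty := Finsupp.support_nonempty_iff.mpr hr
      set nr := r.support.max' hrne with hnr
      have hnrP : P nr := ⟨r, hrT, Finsupp.mem_support_iff.mp (Finset.max'_mem _ hrne),
        fun j hj => by
          by_contra h
          exact absurd (Finset.le_max' _ j (Finsupp.mem_support_iff.mpr h)) (by omega)⟩
      have : n0 ≤ nr := Nat.find_min' hDs' hnrP
      have : nr < n0 := by
        have := hrlow nr
        by_contra hcon
        push_neg at hcon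
        exact Finsupp.mem_support_iff.mp (Finset.max'_mem _ hrne) (hrlow nr (by omega))
      omega
    rw [hr0, map_zero, add_zero] at hqr
    exact ⟨q, by rw [hcy, hqr]⟩
  have HDIVT : ∀ z ∈ T, ∃ h : Qf, z = h * pif (EH ι X β) := by
    intro z hz
    obtain ⟨y, rfl⟩ := hpif z
    obtain ⟨q, hq⟩ := HDIV y hz
    exact ⟨pif (EH ι X q), by rw [hq, map_mul]⟩
  have hFdvd : ∃ h, EH ι X F = h * EH ι X β := by
    obtain ⟨q, hq⟩ := HDIV (EH ι X F) (by rw [hFker]; exact Submodule.zero_mem T)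
    exact ⟨EH ι X q, hq⟩
  -- degree bound : n0 < Dd
  have hn0le : n0 ≤ Dd := Nat.find_min' hDs' ⟨F, by rw [hFker]; exact Submodule.zero_mem T,
    by rw [hF1]; exact one_ne_zero, hFhigh⟩
  have hn0lt : n0 < Dd := by
    rcases lt_or_eq_of_le hn0le with h | h
    · exact h
    · exfalso
      obtain ⟨q, hq⟩ := HDIV (EH ι X F) (by rw [hFker]; exact Submodule.zero_mem T)
      rw [EH_mul ι X σ hX] at hq
      have hFq : F = conv σ q β := EH_injective ι X hrep hq
      have hq0 : q ≠ 0 := by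
        rintro rfl
        rw [conv_zero_left] at hFq
        rw [hFq] at hF1
        exact one_ne_zero hF1.symm
      have hqne : q.support.Nonempty := Finsupp.support_nonempty_iff.mpr hq0
      set Dq := q.support.max' hqne with hDq
      have hqhigh : ∀ i, Dq < i → q i = 0 := by
        intro i hi
        by_contra hcon
        exact absurd (Finset.le_max' _ i (Finsupp.mem_support_iff.mpr hcon)) (by omega)
      have htop : F (Dq + n0) = q Dq * (σ ^ Dq) (β n0) := by
        rw [hFq]; exact conv_apply_top σ hqhigh hβhigh
      rw [hβn, map_one, mul_one] at htop
      have hqDq : q Dq ≠ 0 := Finsupp.mem_support_iff.mp (Finset.max'_mem _ hqne)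
      have hDq0 : Dq = 0 := by
        by_contra hcon
        have : Dd < Dq + n0 := by omega
        rw [hFhigh _ this] at htop
        exact hqDq htop.symm
      have hqsingle : q = Finsupp.single 0 (q 0) := by
        ext i
        rcases Nat.eq_zero_or_pos i with rfl | hi
        · rw [Finsupp.single_eq_same]
        · rw [hqhigh i (by omega), Finsupp.single_eq_of_ne (by omega)]
      have hEHq : EH ι X q = ι (q 0) := by
        conv_lhs => rw [hqsingle]
        rw [EH_single, pow_zero, mul_one]
      have hq00 : q 0 ≠ 0 := by
        rw [hDq0] at hqDq; exact hqDq
      have hβF : EH ι X β = ι (q 0)⁻¹ * EH ι X F := by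
        rw [← EH_mul ι X σ hX] at hq
        rw [hq, hEHq, ← mul_assoc, ← map_mul, inv_mul_cancel₀ hq00, map_one, one_mul]
      apply hT
      rw [eq_bot_iff]
      intro z hz
      obtain ⟨hh, hhz⟩ := HDIVT z hz
      rw [hhz, hβF, map_mul, hFker, mul_zero, mul_zero]
      exact Submodule.zero_mem ⊥
  exact ⟨β, fun i hi => by
      rcases lt_or_eq_of_le hi with h2 | h2
      · exact hβhigh i (by omega)
      · exact hβhigh i (by omega), hFdvd, hβT, HDIVT⟩

end SkewGen


section Specific

variable (p m t : ℕ) [Fact p.Prime]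

lemma spoly_eq_EH {S A : Type*} [Ring S] [Ring A] (ι : S →+* A) (X : A) (c : ℕ →₀ S) :
    spoly ι X c = EH ι X c := by
  rw [EH_apply]; rfl

lemma EH_apply' {S A : Type*} [Ring S] [Ring A] (ι : S →+* A) (X : A) (c : ℕ →₀ S) :
    EH ι X c = c.sum fun i a => ι a * X ^ i := (spoly_eq_EH ι X c).symm

lemma rdc_eps (ht : 0 < t) (a : Fq p m) : rdc p m t ht (eps p m t a) = a := by
  simp [rdc, eps]

lemma rdc_uE (ht : 0 < t) : rdc p m t ht (uE p m t) = 0 := by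
  simp [rdc, uE]

lemma uE_dvd_of_rdc_zero (ht : 0 < t) (y : Rt p m t) (hy : rdc p m t ht y = 0) :
    ∃ z, y = uE p m t * z := by
  obtain ⟨q, rfl⟩ := Ideal.Quotient.mk_surjective y
  have h0 : q.coeff 0 = 0 := by
    rw [Polynomial.coeff_zero_eq_eval_zero]
    simpa [rdc] using hy
  refine ⟨Ideal.Quotient.mk _ q.divX, ?_⟩
  rw [uE, ← map_mul]
  congr 1
  conv_lhs => rw [← Polynomial.X_mul_divX_add q]
  rw [h0, map_zero, add_zero]

lemma uE_pow_t : uE p m t ^ t = 0 := by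
  rw [uE, ← map_pow]
  exact Ideal.Quotient.eq_zero_iff_mem.mpr (Ideal.subset_span rfl)

variable (theta : Fq p m ≃+* Fq p m)

lemma Th_mk (q : Polynomial (Fq p m)) :
    Th p m t theta (Ideal.Quotient.mk _ q) = Ideal.Quotient.mk _ (q.map theta) := by
  simp [Th, Ideal.quotientEquiv_mk, Polynomial.mapEquiv_apply]

lemma Th_eps (a : Fq p m) : Th p m t theta (eps p m t a) = eps p m t (theta a) := by
  rw [eps, RingHom.comp_apply, Th_mk, Polynomial.map_C]
  rfl

lemma Th_uE : Th p m t theta (uE p m t) = uE p m t := by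
  rw [uE, Th_mk, Polynomial.map_X]

lemma ThPow_eps (i : ℕ) (a : Fq p m) :
    (((Th p m t theta : Rt p m t ≃+* Rt p m t) : Rt p m t →+* Rt p m t) ^ i) (eps p m t a)
      = eps p m t (((theta : Fq p m →+* Fq p m) ^ i) a) := by
  induction i generalizing a with
  | zero => simp
  | succ n ih =>
      rw [sigma_pow_apply, sigma_pow_apply]
      have h1 : ((Th p m t theta : Rt p m t ≃+* Rt p m t) : Rt p m t →+* Rt p m t) (eps p m t a)
          = eps p m t (theta a) := Th_eps p m t theta a
      rw [h1, ih]
      rfl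

lemma ThPow_uE (i : ℕ) :
    (((Th p m t theta : Rt p m t ≃+* Rt p m t) : Rt p m t →+* Rt p m t) ^ i) (uE p m t)
      = uE p m t := by
  induction i with
  | zero => simp
  | succ n ih =>
      rw [sigma_pow_apply]
      have h1 : ((Th p m t theta : Rt p m t ≃+* Rt p m t) : Rt p m t →+* Rt p m t) (uE p m t)
          = uE p m t := Th_uE p m t theta
      rw [h1, ih]

lemma lamOf_decomp (ht : 0 < t) (lc : ℕ → Fq p m) :
    ∃ mu, lamOf p m t lc = eps p m t (lc 0) + uE p m t * mu := by
  refine ⟨∑ i ∈ Finset.range (t - 1), eps p m t (lc (i + 1)) * uE p m t ^ i, ?_⟩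
  rw [lamOf]
  obtain ⟨t', rfl⟩ : ∃ t', t = t' + 1 := ⟨t - 1, by omega⟩
  rw [Finset.sum_range_succ']
  have h1 : ∀ i, eps p m (t' + 1) (lc (i + 1)) * uE p m (t' + 1) ^ (i + 1)
      = uE p m (t' + 1) * (eps p m (t' + 1) (lc (i + 1)) * uE p m (t' + 1) ^ i) := by
    intro i; ring
  rw [Finset.sum_congr rfl fun i _ => h1 i, ← Finset.mul_sum, pow_zero, mul_one,
    Nat.add_sub_cancel]
  ring

lemma rdc_lamOf (ht : 0 < t) (d : ℕ → Fq p m) : rdc p m t ht (lamOf p m t d) = d 0 := by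
  rw [lamOf, map_sum]
  rw [Finset.sum_eq_single 0]
  · rw [map_mul, map_pow, rdc_eps, rdc_uE, pow_zero, mul_one]
  · intro i _ hne
    rw [map_mul, map_pow, rdc_uE, zero_pow hne, mul_zero]
  · intro h
    exact absurd (Finset.mem_range.mpr ht) h

lemma theta_fix (ht : 0 < t) (lc : ℕ → Fq p m)
    (hTlam : Th p m t theta (lamOf p m t lc) = lamOf p m t lc) : theta (lc 0) = lc 0 := by
  have h3 : Th p m t theta (lamOf p m t lc) = lamOf p m t (fun i => theta (lc i)) := by
    rw [lamOf, map_sum, lamOf]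
    refine Finset.sum_congr rfl fun i _ => ?_
    rw [map_mul, map_pow, Th_eps, Th_uE]
  have h1 : rdc p m t ht (Th p m t theta (lamOf p m t lc)) = rdc p m t ht (lamOf p m t lc) := by
    rw [hTlam]
  rw [h3, rdc_lamOf, rdc_lamOf] at h1
  exact h1

lemma Fq_pow_pm (hm : 0 < m) (a : Fq p m) : a ^ p ^ m = a := by
  cases nonempty_fintype (Fq p m)
  have hc : Fintype.card (Fq p m) = p ^ m := by
    rw [← Nat.card_eq_fintype_card, GaloisField.card p m (by omega)]
  rw [← hc]
  exact FiniteField.pow_card a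

lemma Fq_pow_pm_iter (hm : 0 < m) (c : ℕ) (a : Fq p m) : a ^ (p ^ m) ^ (c + 1) = a := by
  induction c with
  | zero => rw [pow_one]; exact Fq_pow_pm p m hm a
  | succ n ih =>
      rw [pow_succ, pow_mul, ih]
      exact Fq_pow_pm p m hm a

lemma w_eq_f {Pf : Type*} [Ring Pf] [Nontrivial Pf] [CharP Pf p] (s : ℕ) (hm : 0 < m)
    (iotf : Fq p m →+* Pf) (Xf : Pf) (lc0 : Fq p m) (hfix : theta lc0 = lc0)
    (hXiotf : ∀ a, Xf * iotf a = iotf (theta a) * Xf) :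
    (Xf ^ 2 - iotf (lc0 ^ p ^ (m - s % m))) ^ p ^ s = Xf ^ (2 * p ^ s) - iotf lc0 := by
  set a : Fq p m := lc0 ^ p ^ (m - s % m) with ha
  have hfa : theta a = a := by rw [ha, map_pow, hfix]
  have hcomm : Commute (Xf ^ 2) (iotf a) := by
    have h1 : Commute Xf (iotf a) := by
      show Xf * iotf a = iotf a * Xf
      rw [hXiotf, hfa]
    exact h1.pow_left 2
  rw [sub_pow_char_pow_of_commute p s hcomm, ← pow_mul, ← map_pow]
  have hexp : a ^ p ^ s = lc0 := by
    rw [ha, ← pow_mul, ← pow_add]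
    have hmod : s % m < m := Nat.mod_lt s hm
    have hdm := Nat.div_add_mod s m
    have hml : m * (s / m + 1) = m * (s / m) + m := by ring
    have he : m - s % m + s = m * (s / m + 1) := by omega
    rw [he, pow_mul]
    exact Fq_pow_pm_iter p m hm (s / m) lc0
  rw [hexp]

lemma Q_decomp (ht : 0 < t) {P Q : Type*} [Ring P] [Ring Q]
    (iot : Rt p m t →+* P) (Xp : P)
    (hrepP : ∀ g : P, ∃! c : ℕ →₀ Rt p m t, g = EH iot Xp c)
    (piQ : P →+* Q) (hpiQ : Function.Surjective ⇑piQ) (q : Q) :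
    ∃ (c : ℕ →₀ Fq p m) (g : Q),
      q = piQ (EH iot Xp (Finsupp.mapRange (eps p m t) (map_zero _) c))
        + piQ (iot (uE p m t)) * g := by
  classical
  obtain ⟨x, rfl⟩ := hpiQ q
  obtain ⟨d, hd, -⟩ := hrepP x
  set c : ℕ →₀ Fq p m := Finsupp.mapRange (rdc p m t ht) (map_zero _) d with hc
  set dd : ℕ →₀ Rt p m t := d - Finsupp.mapRange (eps p m t) (map_zero _) c with hdd
  have hrdc0 : ∀ i, rdc p m t ht (dd i) = 0 := by
    intro i
    rw [hdd, Finsupp.sub_apply, map_sub, Finsupp.mapRange_apply, hc, Finsupp.mapRange_apply,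
      rdc_eps, sub_self]
  have hex : ∀ i, ∃ z, dd i = uE p m t * z := fun i => uE_dvd_of_rdc_zero p m t ht _ (hrdc0 i)
  choose zf hzf using hex
  set e : ℕ →₀ Rt p m t := Finsupp.onFinset dd.support (fun i => if dd i = 0 then 0 else zf i)
    (fun i hi => by
      rw [Finsupp.mem_support_iff]
      intro h0
      apply hi
      show (if dd i = 0 then 0 else zf i) = 0
      rw [if_pos h0]) with he
  have hei : ∀ i, dd i = uE p m t * e i := by
    intro i
    rw [he]
    simp only [Finsupp.onFinset_apply]
    by_cases h0 : dd i = 0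
    · rw [if_pos h0, mul_zero, h0]
    · rw [if_neg h0]
      exact hzf i
  have hdsum : d = Finsupp.mapRange (eps p m t) (map_zero _) c + uE p m t • e := by
    ext i
    have h2 := hei i
    rw [hdd, Finsupp.sub_apply] at h2
    rw [Finsupp.add_apply, Finsupp.smul_apply, smul_eq_mul, ← h2]
    ring
  refine ⟨c, piQ (EH iot Xp e), ?_⟩
  rw [hd, hdsum, map_add, EH_const_smul, map_add, map_mul]

end Specific

/-- Classification of the left ideals of `R^{t,x^{2p^s}-λ}_Θ`
when `λ` is not a square in `R^t`. -/
theorem statement12 (p m t s : ℕ) [Fact p.Prime] (hp2 : p ≠ 2) (hm : 0 < m) (ht : 0 < t)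
    (hs : 0 < s) (theta : Fq p m ≃+* Fq p m)
    (lc : ℕ → Fq p m) (hl0 : lc 0 ≠ 0)
    (hTlam : Th p m t theta (lamOf p m t lc) = lamOf p m t lc)
    (hord : thOrder p m t theta ∣ 2 * p ^ s)
    (hnsq : ¬∃ r : Rt p m t, lamOf p m t lc = r ^ 2)
    {P : Type*} [Ring P] (iot : Rt p m t →+* P) (Xp : P)
    (hXiot : ∀ r, Xp * iot r = iot (Th p m t theta r) * Xp)
    (hPrep : ∀ g : P, ∃! c : ℕ →₀ Rt p m t, g = spoly iot Xp c)
    {Pf : Type*} [Ring Pf] (iotf : Fq p m →+* Pf) (Xf : Pf)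
    (hXiotf : ∀ a, Xf * iotf a = iotf (theta a) * Xf)
    (hPfrep : ∀ g : Pf, ∃! c : ℕ →₀ Fq p m, g = spoly iotf Xf c)
    {Q : Type*} [Ring Q] (piQ : P →+* Q) (hpiQ : Function.Surjective piQ)
    (hkerQ : RingHom.ker piQ = Ideal.span {Xp ^ (2 * p ^ s) - iot (lamOf p m t lc)})
    {Qf : Type*} [Ring Qf] (pif : Pf →+* Qf) (hpif : Function.Surjective pif)
    (hkerf : RingHom.ker pif = Ideal.span {Xf ^ (2 * p ^ s) - iotf (lc 0)})
    :
    ∀ J : Ideal Q,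
      J = ⊥ ∨ J = ⊤ ∨
      (J ≠ ⊥ ∧ J ≤ Ideal.span {uQ p m t iot piQ} ∧
        TypeTwo p m t iot Xp piQ iotf Xf pif ((Xf ^ 2 - iotf (lc 0 ^ p ^ (m - s % m))) ^ p ^ s) (2 * p ^ s) J) ∨
      (J ≠ ⊤ ∧ ¬J ≤ Ideal.span {uQ p m t iot piQ} ∧
        ∃ (bc : ℕ →₀ Fq p m) (g : Q) (I : Ideal Q),
          InB p m iotf Xf ((Xf ^ 2 - iotf (lc 0 ^ p ^ (m - s % m))) ^ p ^ s) (2 * p ^ s) bc ∧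
          TypeTwo p m t iot Xp piQ iotf Xf pif ((Xf ^ 2 - iotf (lc 0 ^ p ^ (m - s % m))) ^ p ^ s) (2 * p ^ s) I ∧
          J = Submodule.span Q {lQ p m t iot Xp piQ bc + uQ p m t iot piQ * g} ⊔ I) := by
  intro J
  by_cases hJbot : J = ⊥
  · exact Or.inl hJbot
  by_cases hJtop : J = ⊤
  · exact Or.inr (Or.inl hJtop)
  classical
  set σP : Rt p m t →+* Rt p m t :=
    ((Th p m t theta : Rt p m t ≃+* Rt p m t) : Rt p m t →+* Rt p m t) with hσP
  set θH : Fq p m →+* Fq p m := ((theta : Fq p m ≃+* Fq p m) : Fq p m →+* Fq p m) with hθH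
  set u : Q := uQ p m t iot piQ with hu
  set D : ℕ := 2 * p ^ s with hD
  set MC : (ℕ →₀ Fq p m) → (ℕ →₀ Rt p m t) :=
    fun c => Finsupp.mapRange (eps p m t) (map_zero (eps p m t)) c with hMCdef
  set Ff : ℕ →₀ Fq p m := Finsupp.single D 1 - Finsupp.single 0 (lc 0) with hFf
  set W : Pf := (Xf ^ 2 - iotf (lc 0 ^ p ^ (m - s % m))) ^ p ^ s with hW
  -- basic facts
  have hrepP : ∀ g : P, ∃! c : ℕ →₀ Rt p m t, g = EH iot Xp c := by
    intro g
    simpa only [spoly_eq_EH] using hPrep g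
  have hrepf : ∀ g : Pf, ∃! c : ℕ →₀ Fq p m, g = EH iotf Xf c := by
    intro g
    simpa only [spoly_eq_EH] using hPfrep g
  have hXP : ∀ r, Xp * iot r = iot (σP r) * Xp := fun r => hXiot r
  have hXF : ∀ a, Xf * iotf a = iotf (θH a) * Xf := fun a => hXiotf a
  have hNT : Nontrivial Pf := by
    by_contra h
    rw [not_nontrivial_iff_subsingleton] at h
    have e1 : (0 : Pf) = spoly iotf Xf 0 := by
      rw [spoly, Finsupp.sum_zero_index]
    have e2 : (0 : Pf) = spoly iotf Xf (Finsupp.single 0 1) := by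
      have h2 : spoly iotf Xf (Finsupp.single 0 1) = iotf 1 * Xf ^ 0 :=
        Finsupp.sum_single_index (by rw [map_zero, zero_mul])
      rw [h2]
      exact Subsingleton.elim _ _
    have h3 := (hPfrep 0).unique e1 e2
    have h4 : (0 : Fq p m) = 1 := by
      have := congrFun (congrArg (fun f : ℕ →₀ Fq p m => (f : ℕ → Fq p m)) h3) 0
      simpa using this
    exact one_ne_zero h4.symm
  haveI := hNT
  haveI : CharP Pf p := charP_of_injective_ringHom iotf.injective p
  have hfix : theta (lc 0) = lc 0 := theta_fix p m t theta ht lc hTlam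
  have hD0 : 0 < D := by
    rw [hD]
    have := pow_pos (Nat.Prime.pos (Fact.out : p.Prime)) s
    omega
  have hEHFf : EH iotf Xf Ff = Xf ^ D - iotf (lc 0) := by
    rw [hFf, map_sub, EH_single, EH_single, map_one, one_mul, pow_zero, mul_one]
  have hWF : W = EH iotf Xf Ff := by
    rw [hW, w_eq_f p m theta s hm iotf Xf (lc 0) hfix hXiotf, hEHFf, hD]
  have hFf1 : Ff D = 1 := by
    rw [hFf, Finsupp.sub_apply, Finsupp.single_eq_same,
      Finsupp.single_eq_of_ne (by omega), sub_zero]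
  have hFfhigh : ∀ j, D < j → Ff j = 0 := by
    intro j hj
    rw [hFf, Finsupp.sub_apply, Finsupp.single_eq_of_ne (by omega),
      Finsupp.single_eq_of_ne (by omega), sub_zero]
  have hkerf' : RingHom.ker pif = Ideal.span {EH iotf Xf Ff} := by
    rw [hkerf, hEHFf, hD]
  have hlQf : ∀ c, lQf p m iotf Xf pif c = pif (EH iotf Xf c) := fun c => by
    rw [lQf, spoly_eq_EH]
  have hliftP : ∀ c, liftP p m t iot Xp c = EH iot Xp (MC c) := fun c => by
    rw [hMCdef, liftP, EH_apply']
    rw [Finsupp.sum_mapRange_index (fun i => by rw [map_zero, zero_mul])]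
  have hlQ : ∀ c, lQ p m t iot Xp piQ c = piQ (EH iot Xp (MC c)) := fun c => by
    rw [lQ, hliftP]
  have hepsθ : ∀ (i : ℕ) (a : Fq p m), eps p m t ((θH ^ i) a) = (σP ^ i) (eps p m t a) :=
    fun i a => (ThPow_eps p m t theta i a).symm
  have hMCconv : ∀ c d, MC (conv θH c d) = conv σP (MC c) (MC d) := by
    intro c d
    rw [hMCdef]
    exact mapRange_conv θH (eps p m t) σP (fun i a => hepsθ i a) c d
  have hMCsub : ∀ c d, MC (c - d) = MC c - MC d := fun c d => by
    rw [hMCdef]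
    exact Finsupp.mapRange_sub (map_sub _) c d
  have hMCadd : ∀ c d, MC (c + d) = MC c + MC d := fun c d => by
    rw [hMCdef]
    exact Finsupp.mapRange_add (map_add _) c d
  have hMC0 : MC 0 = 0 := by
    rw [hMCdef]
    exact Finsupp.mapRange_zero
  have hEHmulP : ∀ c d, EH iot Xp c * EH iot Xp d = EH iot Xp (conv σP c d) :=
    fun c d => EH_mul iot Xp σP hXP c d
  have hEHmulF : ∀ c d, EH iotf Xf c * EH iotf Xf d = EH iotf Xf (conv θH c d) :=
    fun c d => EH_mul iotf Xf θH hXF c d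
  have hMCFf : EH iot Xp (MC Ff) = Xp ^ D - iot (eps p m t (lc 0)) := by
    rw [hFf, hMCsub, hMCdef]
    simp only [Finsupp.mapRange_single]
    rw [map_sub, EH_single, EH_single, map_one, map_one, one_mul, pow_zero, mul_one]
  have hfP0 : piQ (Xp ^ (2 * p ^ s) - iot (lamOf p m t lc)) = 0 := by
    have h1 : Xp ^ (2 * p ^ s) - iot (lamOf p m t lc) ∈ RingHom.ker piQ := by
      rw [hkerQ]
      exact Ideal.subset_span rfl
    exact RingHom.mem_ker.mp h1
  obtain ⟨mu, hmu⟩ := lamOf_decomp p m t ht lc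
  have huQ : piQ (iot (uE p m t)) = u := by rw [hu]; rfl
  -- centrality of u
  have hPu : ∀ g : P, iot (uE p m t) * g = g * iot (uE p m t) := by
    intro g
    obtain ⟨c, hc, -⟩ := hrepP g
    rw [hc]
    have h1 : iot (uE p m t) = EH iot Xp (Finsupp.single 0 (uE p m t)) := by
      rw [EH_single, pow_zero, mul_one]
    rw [h1, hEHmulP, hEHmulP]
    congr 1
    ext k
    rw [conv_single_zero_left, conv_single_zero_right]
    rw [hσP, ThPow_uE p m t theta k, mul_comm]
  have hQu : ∀ q : Q, u * q = q * u := by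
    intro q
    obtain ⟨g, rfl⟩ := hpiQ q
    rw [← huQ, ← map_mul, ← map_mul, hPu g]
  have hQupow : ∀ (k : ℕ) (q : Q), u ^ k * q = q * u ^ k := by
    intro k q
    exact ((show Commute u q from hQu q).pow_left k)
  have hmulu : ∀ (y x : Q) (k : ℕ), y * (u ^ k * x) = u ^ k * (y * x) := by
    intro y x k
    rw [← mul_assoc, ← hQupow k y, mul_assoc]
  have hmulu1 : ∀ (y x : Q), y * (u * x) = u * (y * x) := by
    intro y x
    rw [← mul_assoc, ← hQu y, mul_assoc]
  have hut : u ^ t = 0 := by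
    rw [← huQ, ← map_pow, ← map_pow, uE_pow_t, map_zero, map_zero]
  -- kernel transfer from Qf to Q
  have hPker : ∀ c : ℕ →₀ Fq p m, pif (EH iotf Xf c) = 0 →
      ∃ e : Q, piQ (EH iot Xp (MC c)) = u * e := by
    intro c hc
    have h1 : EH iotf Xf c ∈ RingHom.ker pif := RingHom.mem_ker.mpr hc
    rw [hkerf'] at h1
    obtain ⟨hq, hhq⟩ := Submodule.mem_span_singleton.mp h1
    rw [smul_eq_mul] at hhq
    obtain ⟨dq, hdq, -⟩ := hrepf hq
    have h2 : EH iotf Xf c = EH iotf Xf (conv θH dq Ff) := by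
      rw [← hEHmulF, ← hdq, hhq]
    have h3 : c = conv θH dq Ff := EH_injective iotf Xf hrepf h2
    have h4 : piQ (EH iot Xp (MC c))
        = piQ (EH iot Xp (MC dq)) * piQ (EH iot Xp (MC Ff)) := by
      rw [h3, hMCconv, ← hEHmulP, map_mul]
    have h5 : piQ (EH iot Xp (MC Ff)) = u * piQ (iot mu) := by
      have h6 : Xp ^ D - iot (eps p m t (lc 0))
          = (Xp ^ (2 * p ^ s) - iot (lamOf p m t lc)) + iot (uE p m t * mu) := by
        have h7 : lamOf p m t lc - eps p m t (lc 0) = uE p m t * mu := by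
          rw [hmu]; ring
        rw [← h7, map_sub, hD]; abel
      rw [hMCFf, h6, map_add, hfP0, zero_add, map_mul, map_mul, huQ]
    refine ⟨piQ (EH iot Xp (MC dq)) * piQ (iot mu), ?_⟩
    rw [h4, h5, hmulu1]
  -- decomposition of an arbitrary element of Q
  have hdecomp : ∀ q : Q, ∃ (c : ℕ →₀ Fq p m) (g : Q),
      q = piQ (EH iot Xp (MC c)) + u * g := by
    intro q
    obtain ⟨c, g, hq⟩ := Q_decomp p m t ht iot Xp hrepP piQ hpiQ q
    refine ⟨c, g, ?_⟩
    rw [hq, huQ, hMCdef]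
  -- the torsion ideals
  have hTor : ∀ k : ℕ, ∃ T : Ideal Qf, ∀ z : Qf,
      z ∈ T ↔ ∃ c g, z = pif (EH iotf Xf c) ∧
        u ^ k * piQ (EH iot Xp (MC c)) + u ^ (k + 1) * g ∈ J := by
    intro k
    refine ⟨{
      carrier := {z | ∃ c g, z = pif (EH iotf Xf c) ∧
        u ^ k * piQ (EH iot Xp (MC c)) + u ^ (k + 1) * g ∈ J}
      zero_mem' := ⟨0, 0, by rw [map_zero, map_zero], by
        rw [hMC0, map_zero, map_zero, mul_zero, mul_zero, add_zero]
        exact J.zero_mem⟩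
      add_mem' := ?_
      smul_mem' := ?_}, fun z => Iff.rfl⟩
    · rintro x y ⟨c1, g1, rfl, h1⟩ ⟨c2, g2, rfl, h2⟩
      refine ⟨c1 + c2, g1 + g2, by rw [map_add, map_add], ?_⟩
      have h3 : u ^ k * piQ (EH iot Xp (MC (c1 + c2))) + u ^ (k + 1) * (g1 + g2)
          = (u ^ k * piQ (EH iot Xp (MC c1)) + u ^ (k + 1) * g1)
            + (u ^ k * piQ (EH iot Xp (MC c2)) + u ^ (k + 1) * g2) := by
        rw [hMCadd, map_add, map_add, mul_add, mul_add]
        abel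
      rw [h3]
      exact J.add_mem h1 h2
    · rintro q x ⟨c, g, rfl, hmem⟩
      obtain ⟨yq, rfl⟩ := hpif q
      obtain ⟨dq, hdq, -⟩ := hrepf yq
      refine ⟨conv θH dq c, piQ (EH iot Xp (MC dq)) * g, ?_, ?_⟩
      · rw [smul_eq_mul, ← map_mul, hdq, hEHmulF]
      · have h3 : u ^ k * piQ (EH iot Xp (MC (conv θH dq c)))
            + u ^ (k + 1) * (piQ (EH iot Xp (MC dq)) * g)
            = piQ (EH iot Xp (MC dq))
              * (u ^ k * piQ (EH iot Xp (MC c)) + u ^ (k + 1) * g) := by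
          rw [hMCconv, ← hEHmulP, map_mul, mul_add, hmulu, hmulu]
        rw [h3]
        exact Ideal.mul_mem_left J _ hmem
  choose T hT using hTor
  -- generator data for each nonzero torsion ideal
  have hGEN : ∀ k : ℕ, ∃ (β : ℕ →₀ Fq p m) (g' : Q), T k ≠ ⊥ →
      (∀ i, D ≤ i → β i = 0) ∧ (∃ h, EH iotf Xf Ff = h * EH iotf Xf β) ∧
      (u ^ k * piQ (EH iot Xp (MC β)) + u ^ (k + 1) * g' ∈ J) ∧
      (∀ c g, u ^ k * piQ (EH iot Xp (MC c)) + u ^ (k + 1) * g ∈ J →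
        ∃ h : Qf, pif (EH iotf Xf c) = h * pif (EH iotf Xf β)) := by
    intro k
    by_cases hTk : T k = ⊥
    · exact ⟨0, 0, fun h => absurd hTk h⟩
    · obtain ⟨β, hβ1, hβ2, hβ3, hβ4⟩ := principal_ideal iotf Xf θH hXF hrepf pif hpif
        Ff D hFf1 hFfhigh hkerf' (T k) hTk
      obtain ⟨c, g, hcz, hcJ⟩ := (hT k _).mp hβ3
      have h2 : pif (EH iotf Xf (β - c)) = 0 := by
        rw [map_sub, map_sub, hcz, sub_self]
      obtain ⟨e, he⟩ := hPker _ h2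
      rw [hMCsub, map_sub, map_sub] at he
      refine ⟨β, g - e, fun _ => ⟨hβ1, hβ2, ?_, ?_⟩⟩
      · have hβc : piQ (EH iot Xp (MC β)) = piQ (EH iot Xp (MC c)) + u * e :=
          sub_eq_iff_eq_add'.mp he
        have h3 : u ^ k * piQ (EH iot Xp (MC β)) + u ^ (k + 1) * (g - e)
            = u ^ k * piQ (EH iot Xp (MC c)) + u ^ (k + 1) * g := by
          rw [hβc, mul_add, ← mul_assoc, ← pow_succ, mul_sub]
          abel
        rw [h3]
        exact hcJ
      · intro c2 g2 hmem2
        have h6 : pif (EH iotf Xf c2) ∈ T k := (hT k _).mpr ⟨c2, g2, rfl, hmem2⟩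
        exact hβ4 _ h6
  choose β g' hβprop using hGEN

  -- the reduction step
  have hstep : ∀ (k : ℕ), T k ≠ ⊥ → ∀ (c : ℕ →₀ Fq p m) (gb : Q),
      u ^ k * piQ (EH iot Xp (MC c)) + u ^ (k + 1) * gb ∈ J →
      ∃ (dd : ℕ →₀ Fq p m) (e : Q),
        u ^ k * piQ (EH iot Xp (MC c)) + u ^ (k + 1) * gb
          = piQ (EH iot Xp (MC dd))
              * (u ^ k * piQ (EH iot Xp (MC (β k))) + u ^ (k + 1) * g' k)
            + u ^ (k + 1) * e := by
    intro k hTk c gb hmem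
    obtain ⟨hq, hhq⟩ := (hβprop k hTk).2.2.2 c gb hmem
    obtain ⟨yd, rfl⟩ := hpif hq
    obtain ⟨dd, hdd, -⟩ := hrepf yd
    have h2 : pif (EH iotf Xf (c - conv θH dd (β k))) = 0 := by
      rw [map_sub, map_sub, hhq, ← hEHmulF, map_mul, ← hdd, sub_self]
    obtain ⟨e1, he1⟩ := hPker _ h2
    rw [hMCsub, map_sub, map_sub] at he1
    have h3 : piQ (EH iot Xp (MC c))
        = piQ (EH iot Xp (MC dd)) * piQ (EH iot Xp (MC (β k))) + u * e1 := by
      have h4 : piQ (EH iot Xp (MC (conv θH dd (β k))))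
          = piQ (EH iot Xp (MC dd)) * piQ (EH iot Xp (MC (β k))) := by
        rw [hMCconv, ← hEHmulP, map_mul]
      rw [← h4]
      exact sub_eq_iff_eq_add'.mp he1
    refine ⟨dd, e1 + gb - piQ (EH iot Xp (MC dd)) * g' k, ?_⟩
    rw [h3]
    rw [mul_add (piQ (EH iot Xp (MC dd))), hmulu, hmulu]
    rw [mul_add (u ^ k), ← mul_assoc (u ^ k) u e1, ← pow_succ]
    rw [mul_sub, mul_add]
    abel
  -- the downward induction
  have hMAIN : ∀ (k0 : ℕ) (GSet : Set Q),
      (∀ k : ℕ, T k ≠ ⊥ → k0 ≤ k → k < t →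
        u ^ k * piQ (EH iot Xp (MC (β k))) + u ^ (k + 1) * g' k ∈ GSet) →
      ∀ j : ℕ, j + k0 ≤ t → ∀ a ∈ J, (∃ b, a = u ^ (t - j) * b) →
        a ∈ Submodule.span Q GSet := by
    intro k0 GSet hGS j
    induction j with
    | zero =>
        rintro - a - ⟨b, hb⟩
        rw [Nat.sub_zero, hut, zero_mul] at hb
        rw [hb]
        exact Submodule.zero_mem _
    | succ j IH =>
        rintro hjt a haJ ⟨b, hb⟩
        by_cases hjt2 : t ≤ j
        · exact IH (by omega) a haJ ⟨b, by rw [show t - (j + 1) = t - j from by omega] at hb; exact hb⟩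
        obtain ⟨c, gb, hbeq⟩ := hdecomp b
        have hk1 : (t - (j + 1)) + 1 = t - j := by omega
        have ha2 : a = u ^ (t - (j + 1)) * piQ (EH iot Xp (MC c))
            + u ^ ((t - (j + 1)) + 1) * gb := by
          rw [hb, hbeq, mul_add, ← mul_assoc, ← pow_succ]
        by_cases hTk : T (t - (j + 1)) = ⊥
        · have hzT : pif (EH iotf Xf c) ∈ T (t - (j + 1)) :=
            (hT _ _).mpr ⟨c, gb, rfl, by rw [← ha2]; exact haJ⟩
          rw [hTk, Submodule.mem_bot] at hzT
          obtain ⟨e, he⟩ := hPker c hzT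
          have ha3 : a = u ^ (t - j) * (e + gb) := by
            rw [ha2, he, ← mul_assoc, ← pow_succ, ← hk1, mul_add]
          exact IH (by omega) a haJ ⟨e + gb, ha3⟩
        · obtain ⟨dd, e, hre⟩ := hstep _ hTk c gb (by rw [← ha2]; exact haJ)
          set Gk := u ^ (t - (j + 1)) * piQ (EH iot Xp (MC (β (t - (j + 1)))))
            + u ^ ((t - (j + 1)) + 1) * g' (t - (j + 1)) with hGk
          have h6 : a - piQ (EH iot Xp (MC dd)) * Gk ∈ J :=
            Submodule.sub_mem _ haJ (Ideal.mul_mem_left _ _ ((hβprop _ hTk).2.2.1))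
          have h7 : a - piQ (EH iot Xp (MC dd)) * Gk = u ^ (t - j) * e := by
            rw [ha2, hre, ← hk1]
            abel
          have h8 : a - piQ (EH iot Xp (MC dd)) * Gk ∈ Submodule.span Q GSet :=
            IH (by omega) _ h6 ⟨e, h7⟩
          have h9 : piQ (EH iot Xp (MC dd)) * Gk ∈ Submodule.span Q GSet :=
            Ideal.mul_mem_left _ _ (Submodule.subset_span (hGS _ hTk (by omega) (by omega)))
          have h10 : a = (a - piQ (EH iot Xp (MC dd)) * Gk) + piQ (EH iot Xp (MC dd)) * Gk := by
            abel
          rw [h10]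
          exact Submodule.add_mem _ h8 h9
  -- enumeration of the jump indices
  set KS : Finset ℕ := (Finset.range t).filter (fun k => 1 ≤ k ∧ T k ≠ ⊥) with hKS
  set iF : Finset ℕ := KS.image (fun k => t - 1 - k) with hiF
  set n : ℕ := iF.card with hn
  set idx : Fin n → ℕ := fun j => ((iF.orderIsoOfFin hn.symm) j : ℕ) with hidx
  have hidxmem : ∀ j : Fin n, idx j ∈ iF := fun j => ((iF.orderIsoOfFin hn.symm) j).2
  have hidxprop : ∀ j : Fin n, 1 ≤ t - 1 - idx j ∧ t - 1 - idx j < t ∧ T (t - 1 - idx j) ≠ ⊥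
      ∧ idx j ≤ t - 2 ∧ t - idx j = (t - 1 - idx j) + 1 := by
    intro j
    have hmem := hidxmem j
    rw [hiF, Finset.mem_image] at hmem
    obtain ⟨k, hk, hkidx⟩ := hmem
    rw [hKS, Finset.mem_filter, Finset.mem_range] at hk
    obtain ⟨hkrt, hk1, hkT⟩ := hk
    have hkeq : t - 1 - idx j = k := by omega
    exact ⟨by omega, by omega, by rw [hkeq]; exact hkT, by omega, by omega⟩
  have hidxmono : StrictMono idx := by
    intro a b hab
    have h1 : (iF.orderIsoOfFin hn.symm) a < (iF.orderIsoOfFin hn.symm) b :=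
      (OrderIso.lt_iff_lt _).mpr hab
    exact Subtype.coe_lt_coe.mpr h1
  have hsurj : ∀ k : ℕ, 1 ≤ k → k < t → T k ≠ ⊥ → ∃ j : Fin n, idx j = t - 1 - k := by
    intro k h1 h2 h3
    have hkKS : k ∈ KS := by
      rw [hKS, Finset.mem_filter, Finset.mem_range]
      exact ⟨h2, h1, h3⟩
    have hmemiF : t - 1 - k ∈ iF := by
      rw [hiF, Finset.mem_image]
      exact ⟨k, hkKS, rfl⟩
    refine ⟨(iF.orderIsoOfFin hn.symm).symm ⟨t - 1 - k, hmemiF⟩, ?_⟩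
    show (((iF.orderIsoOfFin hn.symm) ((iF.orderIsoOfFin hn.symm).symm ⟨t - 1 - k, hmemiF⟩)) : ℕ)
      = t - 1 - k
    rw [OrderIso.apply_symm_apply]
  -- membership of the generators
  have hGSmem : ∀ k : ℕ, T k ≠ ⊥ → 1 ≤ k → k < t →
      u ^ k * piQ (EH iot Xp (MC (β k))) + u ^ (k + 1) * g' k
        ∈ Set.range (fun j : Fin n =>
            u ^ (t - 1 - idx j) * piQ (EH iot Xp (MC (β (t - 1 - idx j))))
              + u ^ ((t - 1 - idx j) + 1) * g' (t - 1 - idx j)) := by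
    intro k hTk h1 h2
    obtain ⟨j, hj⟩ := hsurj k h1 h2 hTk
    have hkeq : t - 1 - idx j = k := by omega
    refine ⟨j, ?_⟩
    show u ^ (t - 1 - idx j) * piQ (EH iot Xp (MC (β (t - 1 - idx j))))
        + u ^ ((t - 1 - idx j) + 1) * g' (t - 1 - idx j) = _
    rw [hkeq]
  -- relating the syntactic generators to the canonical ones
  have hgenform : ∀ j : Fin n,
      u ^ (t - 1 - idx j) * lQ p m t iot Xp piQ (β (t - 1 - idx j))
        - u ^ (t - idx j) * (-(g' (t - 1 - idx j)))
      = u ^ (t - 1 - idx j) * piQ (EH iot Xp (MC (β (t - 1 - idx j))))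
        + u ^ ((t - 1 - idx j) + 1) * g' (t - 1 - idx j) := by
    intro j
    rw [hlQ, (hidxprop j).2.2.2.2, mul_neg, sub_neg_eq_add]
  have hfeq : (fun j : Fin n =>
      uQ p m t iot piQ ^ (t - 1 - idx j)
          * lQ p m t iot Xp piQ ((fun j : Fin n => β (t - 1 - idx j)) j)
        - uQ p m t iot piQ ^ (t - idx j) * (fun j : Fin n => -(g' (t - 1 - idx j))) j)
      = (fun j : Fin n =>
          u ^ (t - 1 - idx j) * piQ (EH iot Xp (MC (β (t - 1 - idx j))))
            + u ^ ((t - 1 - idx j) + 1) * g' (t - 1 - idx j)) := by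
    funext j
    exact hgenform j
  -- the side condition
  have hside : ∀ (jj : Fin n) (cc : ℕ →₀ Fq p m) (g : Q),
      u ^ (t - 1 - idx jj) * lQ p m t iot Xp piQ cc + u ^ (t - idx jj) * g ∈ J →
      RDvdC p m iotf Xf pif (β (t - 1 - idx jj)) cc := by
    intro jj cc g hmem
    rw [hlQ, (hidxprop jj).2.2.2.2] at hmem
    obtain ⟨h, hh⟩ := (hβprop _ ((hidxprop jj).2.2.1)).2.2.2 cc g hmem
    exact ⟨h, by rw [hlQf, hlQf]; exact hh⟩
  have hspanJ : Submodule.span Q (Set.range (fun j : Fin n =>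
      u ^ (t - 1 - idx j) * piQ (EH iot Xp (MC (β (t - 1 - idx j))))
        + u ^ ((t - 1 - idx j) + 1) * g' (t - 1 - idx j))) ≤ J := by
    rw [Submodule.span_le]
    rintro x ⟨j, rfl⟩
    exact (hβprop _ ((hidxprop j).2.2.1)).2.2.1
  have hInB : ∀ k, T k ≠ ⊥ → InB p m iotf Xf W D (β k) := by
    intro k hTk
    refine ⟨(hβprop k hTk).1, ?_⟩
    obtain ⟨h, hh⟩ := (hβprop k hTk).2.1
    exact ⟨h, by rw [hWF, spoly_eq_EH]; exact hh⟩
  by_cases hle : J ≤ Ideal.span {u}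
  · -- case (ii)
    refine Or.inr (Or.inr (Or.inl ⟨hJbot, hle, ?_⟩))
    refine ⟨n, idx, (fun j => β (t - 1 - idx j)), (fun j => -(g' (t - 1 - idx j))),
      hidxmono, (fun j => (hidxprop j).2.2.2.1), (fun j => hInB _ ((hidxprop j).2.2.1)),
      ?_, ?_⟩
    · rw [hfeq]
      apply le_antisymm
      · intro a haJ
        have ha1 : ∃ b, a = u ^ (t - (t - 1)) * b := by
          obtain ⟨cu, hcu⟩ := Submodule.mem_span_singleton.mp (hle haJ)
          rw [smul_eq_mul] at hcu
          refine ⟨cu, ?_⟩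
          rw [show t - (t - 1) = 1 from by omega, pow_one, hQu cu]
          exact hcu.symm
        exact hMAIN 1 _ (fun k hTk h1 h2 => hGSmem k hTk h1 h2) (t - 1) (by omega) a haJ ha1
      · exact hspanJ
    · intro j k hjk cc g hmem
      apply hside j cc g
      have h1 : Submodule.span Q ((fun l : Fin n =>
          uQ p m t iot piQ ^ (t - 1 - idx l)
              * lQ p m t iot Xp piQ ((fun j : Fin n => β (t - 1 - idx j)) l)
            - uQ p m t iot piQ ^ (t - idx l) * (fun j : Fin n => -(g' (t - 1 - idx j))) l)
          '' {l | k ≤ l}) ≤ J := by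
        rw [Submodule.span_le]
        rintro x ⟨l, -, rfl⟩
        show u ^ (t - 1 - idx l) * lQ p m t iot Xp piQ (β (t - 1 - idx l))
            - u ^ (t - idx l) * (-(g' (t - 1 - idx l))) ∈ J
        rw [hgenform l]
        exact (hβprop _ ((hidxprop l).2.2.1)).2.2.1
      exact h1 hmem
  · -- case (iii)
    have hT0 : T 0 ≠ ⊥ := by
      intro hbot
      apply hle
      intro a haJ
      obtain ⟨c, gb, hab⟩ := hdecomp a
      have ha2 : a = u ^ 0 * piQ (EH iot Xp (MC c)) + u ^ (0 + 1) * gb := by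
        rw [pow_zero, one_mul, zero_add, pow_one]
        exact hab
      have hzT : pif (EH iotf Xf c) ∈ T 0 :=
        (hT _ _).mpr ⟨c, gb, rfl, by rw [← ha2]; exact haJ⟩
      rw [hbot, Submodule.mem_bot] at hzT
      obtain ⟨e, he⟩ := hPker c hzT
      refine Submodule.mem_span_singleton.mpr ⟨e + gb, ?_⟩
      rw [smul_eq_mul, ← hQu, mul_add, ← he, ← hab]
    refine Or.inr (Or.inr (Or.inr ⟨hJtop, hle, β 0, g' 0,
      Submodule.span Q (Set.range (fun j : Fin n =>
        uQ p m t iot piQ ^ (t - 1 - idx j)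
            * lQ p m t iot Xp piQ ((fun j : Fin n => β (t - 1 - idx j)) j)
          - uQ p m t iot piQ ^ (t - idx j) * (fun j : Fin n => -(g' (t - 1 - idx j))) j)),
      hInB 0 hT0, ?_, ?_⟩))
    · refine ⟨n, idx, (fun j => β (t - 1 - idx j)), (fun j => -(g' (t - 1 - idx j))),
        hidxmono, (fun j => (hidxprop j).2.2.2.1), (fun j => hInB _ ((hidxprop j).2.2.1)),
        rfl, ?_⟩
      intro j k hjk cc g hmem
      apply hside j cc g
      have h1 : Submodule.span Q ((fun l : Fin n =>
          uQ p m t iot piQ ^ (t - 1 - idx l)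
              * lQ p m t iot Xp piQ ((fun j : Fin n => β (t - 1 - idx j)) l)
            - uQ p m t iot piQ ^ (t - idx l) * (fun j : Fin n => -(g' (t - 1 - idx j))) l)
          '' {l | k ≤ l}) ≤ J := by
        rw [Submodule.span_le]
        rintro x ⟨l, -, rfl⟩
        show u ^ (t - 1 - idx l) * lQ p m t iot Xp piQ (β (t - 1 - idx l))
            - u ^ (t - idx l) * (-(g' (t - 1 - idx l))) ∈ J
        rw [hgenform l]
        exact (hβprop _ ((hidxprop l).2.2.1)).2.2.1
      exact h1 hmem
    · have hG0 : lQ p m t iot Xp piQ (β 0) + u * g' 0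
          = u ^ 0 * piQ (EH iot Xp (MC (β 0))) + u ^ (0 + 1) * g' 0 := by
        rw [hlQ, pow_zero, one_mul, zero_add, pow_one]
      apply le_antisymm
      · intro a haJ
        have hbig := hMAIN 0 ({lQ p m t iot Xp piQ (β 0) + u * g' 0}
            ∪ Set.range (fun j : Fin n =>
              u ^ (t - 1 - idx j) * piQ (EH iot Xp (MC (β (t - 1 - idx j))))
                + u ^ ((t - 1 - idx j) + 1) * g' (t - 1 - idx j)))
          (fun k hTk hk0 hkt => by
            rcases Nat.eq_zero_or_pos k with rfl | hk1
            · left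
              rw [Set.mem_singleton_iff, hG0]
            · right
              exact hGSmem k hTk hk1 hkt)
          t (by omega) a haJ ⟨a, by rw [Nat.sub_self, pow_zero, one_mul]⟩
        rw [Submodule.span_union] at hbig
        rw [hfeq]
        exact hbig
      · apply sup_le
        · rw [Submodule.span_le]
          rintro x hx
          rw [Set.mem_singleton_iff] at hx
          subst hx
          rw [hG0]
          exact (hβprop 0 hT0).2.2.1
        · rw [hfeq]
          exact hspanJ

end SkewPaper
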